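/- arXiv:math/0012264 — 2 statements merged into one kernel-verified Lean document; each statement's English description precedes it below -/
import Mathlib

section
/- Let R = ∧²V ⊆ V ⊗ V (the alternating tensors), β = 0, and α : ∧²V → V a linear map. Then the Braverman–Gaitsgory conditions (1) im(α⊗id − id⊗α) ⊆ R on (R⊗V)∩(V⊗R), and (2) α∘(α⊗id − id⊗α) = 0, hold if and only if the bracket [x,y] := α(y∧x) satisfies the Jacobi identity, i.e. makes V into a Lie algebra. -/
open TensorProduct Module

noncomputable section

variable (k : Type) [Field k]
variable (V : Type) [AddCommGroup V] [Module k V]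

/-- The subspace `R = ∧²V ⊆ V ⊗ V` of antisymmetric tensors, identified with the span of the
elements `x ⊗ y − y ⊗ x`. -/
def altTensors : Submodule k (V ⊗[k] V) :=
  Submodule.span k {w | ∃ x y : V, w = x ⊗ₜ[k] y - y ⊗ₜ[k] x}

/-- The image of `R ⊗ V` inside `(V ⊗ V) ⊗ V`. -/
def RtensorV (R : Submodule k (V ⊗[k] V)) : Submodule k ((V ⊗[k] V) ⊗[k] V) :=
  LinearMap.range (TensorProduct.map R.subtype (LinearMap.id (R := k) (M := V)))

/-- The image of `V ⊗ R` inside `(V ⊗ V) ⊗ V` (via the associator). -/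
def VtensorR (R : Submodule k (V ⊗[k] V)) : Submodule k ((V ⊗[k] V) ⊗[k] V) :=
  LinearMap.range (((TensorProduct.assoc k V V V).symm.toLinearMap).comp
    (TensorProduct.map (LinearMap.id (R := k) (M := V)) R.subtype))

/-- The map `α⊗id − id⊗α : V^{⊗3} → V^{⊗2}` for (the extension by zero of) `α`. -/
def bgMap (a : V ⊗[k] V →ₗ[k] V) : (V ⊗[k] V) ⊗[k] V →ₗ[k] V ⊗[k] V :=
  TensorProduct.map a (LinearMap.id (R := k) (M := V))
    - (TensorProduct.map (LinearMap.id (R := k) (M := V)) a).comp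
        (TensorProduct.assoc k V V V).toLinearMap

/-!
A tensor in `(R ⊗ V) ⊓ (V ⊗ R)` has coefficients, in a product basis, that change sign when the
first two or the last two indices are swapped. Since `2 ≠ 0` they vanish on repeated indices, and
subtracting multiples of the antisymmetrizations `x ∧ y ∧ z` of basis vectors shrinks the support;
so the intersection is spanned by the `x ∧ y ∧ z`. (Averaging over `S₃` would be shorter but needs
`6` to be invertible.) On `x ∧ y ∧ z`, `α ⊗ id − id ⊗ α` takes the value
`∑_cyc (z ⊗ [x,y] − [x,y] ⊗ z) ∈ R`, so condition (1) always holds, and applying `α` to it gives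
the Jacobiator of `x, y, z`, so condition (2) is exactly the Jacobi identity.
-/

section

variable {V}

local notation "W₃" => RtensorV k V (altTensors k V) ⊓ VtensorR k V (altTensors k V)

def antisymm3 (x y z : V) : (V ⊗[k] V) ⊗[k] V :=
  ((x ⊗ₜ[k] y) ⊗ₜ[k] z - (y ⊗ₜ[k] x) ⊗ₜ[k] z)
    + ((y ⊗ₜ[k] z) ⊗ₜ[k] x - (z ⊗ₜ[k] y) ⊗ₜ[k] x)
    + ((z ⊗ₜ[k] x) ⊗ₜ[k] y - (x ⊗ₜ[k] z) ⊗ₜ[k] y)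

variable (V) in
def antisymm3Span : Submodule k ((V ⊗[k] V) ⊗[k] V) :=
  Submodule.span k {w | ∃ x y z : V, w = antisymm3 k x y z}

theorem antisymm3_mem_antisymm3Span (x y z : V) : antisymm3 k x y z ∈ antisymm3Span k V :=
  Submodule.subset_span ⟨x, y, z, rfl⟩

variable {k}

theorem tmul_sub_tmul_mem_altTensors (x y : V) : x ⊗ₜ[k] y - y ⊗ₜ[k] x ∈ altTensors k V :=
  Submodule.subset_span ⟨x, y, rfl⟩

theorem antisymm3_mem_inf (x y z : V) : antisymm3 k x y z ∈ W₃ := by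
  let r (u v : V) : altTensors k V := ⟨_, tmul_sub_tmul_mem_altTensors u v⟩
  constructor
  · refine ⟨r x y ⊗ₜ z + r y z ⊗ₜ x + r z x ⊗ₜ y, ?_⟩
    simp [r, antisymm3, sub_tmul]
  · refine ⟨x ⊗ₜ r y z + y ⊗ₜ r z x + z ⊗ₜ r x y, ?_⟩
    simp only [LinearMap.comp_apply, LinearEquiv.coe_coe, map_add, map_tmul, LinearMap.id_coe,
      id_eq, Submodule.subtype_apply, tmul_sub, map_sub, assoc_symm_tmul, antisymm3, r]
    abel

section Coefficients

variable {ι : Type*} (b : Basis ι k V)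

abbrev tripleBasis : Basis ((ι × ι) × ι) k ((V ⊗[k] V) ⊗[k] V) :=
  (b.tensorProduct b).tensorProduct b

theorem repr_swap_of_mem_altTensors {r : V ⊗[k] V} (hr : r ∈ altTensors k V) (i j : ι) :
    (b.tensorProduct b).repr r (j, i) = -(b.tensorProduct b).repr r (i, j) := by
  induction hr using Submodule.span_induction with
  | mem w hw =>
    obtain ⟨x, y, rfl⟩ := hw
    simp only [map_sub, Finsupp.sub_apply, Basis.tensorProduct_repr_tmul_apply, smul_eq_mul]
    ring
  | zero => simp
  | add u w _ _ hu hw => simp [hu, hw, add_comm]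
  | smul c u _ hu => simp [hu]

theorem repr_assoc_symm_tmul (x : V) (w : V ⊗[k] V) (i j l : ι) :
    (tripleBasis b).repr ((TensorProduct.assoc k V V V).symm (x ⊗ₜ w)) ((i, j), l)
      = b.repr x i * (b.tensorProduct b).repr w (j, l) := by
  induction w using TensorProduct.induction_on with
  | zero => simp
  | tmul y z => simp [mul_comm, mul_left_comm]
  | add u w hu hw => simp [tmul_add, hu, hw, mul_add]

theorem repr_swap12_of_mem_RtensorV {t : (V ⊗[k] V) ⊗[k] V}
    (ht : t ∈ RtensorV k V (altTensors k V)) (i j l : ι) :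
    (tripleBasis b).repr t ((j, i), l) = -(tripleBasis b).repr t ((i, j), l) := by
  obtain ⟨s, rfl⟩ := ht
  induction s using TensorProduct.induction_on with
  | zero => simp only [map_zero, Finsupp.zero_apply, neg_zero]
  | tmul r z => simp [repr_swap_of_mem_altTensors b r.2 i j]
  | add u w hu hw => simp only [map_add, Finsupp.add_apply, hu, hw, neg_add]

theorem repr_swap23_of_mem_VtensorR {t : (V ⊗[k] V) ⊗[k] V}
    (ht : t ∈ VtensorR k V (altTensors k V)) (i j l : ι) :
    (tripleBasis b).repr t ((i, l), j) = -(tripleBasis b).repr t ((i, j), l) := by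
  obtain ⟨s, rfl⟩ := ht
  induction s using TensorProduct.induction_on with
  | zero => simp only [map_zero, Finsupp.zero_apply, neg_zero]
  | tmul x r => simp [repr_assoc_symm_tmul, repr_swap_of_mem_altTensors b r.2 j l]
  | add u w hu hw => simp only [map_add, Finsupp.add_apply, hu, hw, neg_add]

theorem repr_antisymm3 (i j l : ι) :
    (tripleBasis b).repr (antisymm3 k (b i) (b j) (b l))
      = (Finsupp.single ((i, j), l) 1 - Finsupp.single ((j, i), l) 1)
        + (Finsupp.single ((j, l), i) 1 - Finsupp.single ((l, j), i) 1)
        + (Finsupp.single ((l, i), j) 1 - Finsupp.single ((i, l), j) 1) := by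
  simp only [antisymm3, map_add, map_sub, ← Basis.tensorProduct_apply, Basis.repr_self]

variable {b}

theorem pairwise_ne_of_repr_ne_zero (htwo : (2 : k) ≠ 0) {u : (V ⊗[k] V) ⊗[k] V} (hu : u ∈ W₃)
    {i j l : ι} (h : (tripleBasis b).repr u ((i, j), l) ≠ 0) : i ≠ j ∧ j ≠ l ∧ i ≠ l := by
  have h12 := repr_swap12_of_mem_RtensorV b hu.1
  have h23 := repr_swap23_of_mem_VtensorR b hu.2
  have eq_zero {c : k} (hc : c = -c) : c = 0 := by
    rw [eq_neg_iff_add_eq_zero, ← two_mul] at hc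
    exact (mul_eq_zero.1 hc).resolve_left htwo
  have diag12 (i l : ι) : (tripleBasis b).repr u ((i, i), l) = 0 := eq_zero (h12 i i l)
  have diag23 (i j : ι) : (tripleBasis b).repr u ((i, j), j) = 0 := eq_zero (h23 i j j)
  refine ⟨?_, ?_, ?_⟩ <;> rintro rfl
  · exact h (diag12 _ _)
  · exact h (diag23 _ _)
  · exact h (by rw [h23, diag12, neg_zero])

theorem repr_perms_eq_zero_of_repr_eq_zero {u : (V ⊗[k] V) ⊗[k] V} (hu : u ∈ W₃) {i j l : ι}
    (h : (tripleBasis b).repr u ((i, j), l) = 0) :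
    (tripleBasis b).repr u ((j, i), l) = 0 ∧ (tripleBasis b).repr u ((j, l), i) = 0 ∧
      (tripleBasis b).repr u ((l, j), i) = 0 ∧ (tripleBasis b).repr u ((l, i), j) = 0 ∧
      (tripleBasis b).repr u ((i, l), j) = 0 := by
  have h12 := repr_swap12_of_mem_RtensorV b hu.1
  have h23 := repr_swap23_of_mem_VtensorR b hu.2
  have h_ji : (tripleBasis b).repr u ((j, i), l) = 0 := by rw [h12, h, neg_zero]
  have h_il : (tripleBasis b).repr u ((i, l), j) = 0 := by rw [h23, h, neg_zero]
  have h_jl : (tripleBasis b).repr u ((j, l), i) = 0 := by rw [h23, h_ji, neg_zero]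
  exact ⟨h_ji, h_jl, by rw [h12, h_jl, neg_zero], by rw [h12, h_il, neg_zero], h_il⟩

theorem support_repr_sub_antisymm3_ssubset (htwo : (2 : k) ≠ 0) {t : (V ⊗[k] V) ⊗[k] V}
    (ht : t ∈ W₃) {i j l : ι} (hq : ((i, j), l) ∈ ((tripleBasis b).repr t).support) :
    ((tripleBasis b).repr
        (t - (tripleBasis b).repr t ((i, j), l) • antisymm3 k (b i) (b j) (b l))).support
      ⊂ ((tripleBasis b).repr t).support := by
  set c := (tripleBasis b).repr t ((i, j), l)
  set t' := t - c • antisymm3 k (b i) (b j) (b l)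
  have ht' : t' ∈ W₃ := sub_mem ht (Submodule.smul_mem _ c (antisymm3_mem_inf _ _ _))
  obtain ⟨hij, hjl, hil⟩ := pairwise_ne_of_repr_ne_zero htwo ht (Finsupp.mem_support_iff.1 hq)
  have hrepr : (tripleBasis b).repr t' = (tripleBasis b).repr t - c •
      ((Finsupp.single ((i, j), l) 1 - Finsupp.single ((j, i), l) 1)
        + (Finsupp.single ((j, l), i) 1 - Finsupp.single ((l, j), i) 1)
        + (Finsupp.single ((l, i), j) 1 - Finsupp.single ((i, l), j) 1)) := by
    rw [map_sub, map_smul, repr_antisymm3]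
  have hq' : (tripleBasis b).repr t' ((i, j), l) = 0 := by
    simp [hrepr, hij, hjl, hil, c]
  obtain ⟨h₁, h₂, h₃, h₄, h₅⟩ := repr_perms_eq_zero_of_repr_eq_zero ht' hq'
  refine (Finset.ssubset_iff_of_subset fun p hp => ?_).2 ⟨_, hq, by simpa using hq'⟩
  rw [Finsupp.mem_support_iff] at hp ⊢
  -- `t'` vanishes on the six permutations of `(i, j, l)` and agrees with `t` elsewhere.
  by_cases horb : p = ((i, j), l) ∨ p = ((j, i), l) ∨ p = ((j, l), i) ∨ p = ((l, j), i) ∨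
      p = ((l, i), j) ∨ p = ((i, l), j)
  · rcases horb with rfl | rfl | rfl | rfl | rfl | rfl <;> contradiction
  · push Not at horb
    obtain ⟨hp₀, hp₁, hp₂, hp₃, hp₄, hp₅⟩ := horb
    simpa [hrepr, Finsupp.single_apply, Ne.symm hp₀, Ne.symm hp₁, Ne.symm hp₂, Ne.symm hp₃,
      Ne.symm hp₄, Ne.symm hp₅] using hp

end Coefficients

theorem inf_eq_antisymm3Span (htwo : (2 : k) ≠ 0) : W₃ = antisymm3Span k V := by
  refine le_antisymm (fun t ht => ?_) (Submodule.span_le.2 ?_)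
  · have b := Basis.ofVectorSpace k V
    induction hn : ((tripleBasis b).repr t).support.card using Nat.strong_induction_on
      generalizing t with
    | _ n ih =>
      obtain h0 | ⟨⟨⟨i, j⟩, l⟩, hq⟩ := ((tripleBasis b).repr t).support.eq_empty_or_nonempty
      · rw [(tripleBasis b).repr.map_eq_zero_iff.1 (Finsupp.support_eq_empty.1 h0)]
        exact zero_mem _
      · have hlt := Finset.card_lt_card (support_repr_sub_antisymm3_ssubset htwo ht hq)
        have := ih _ (hn ▸ hlt) _
          (sub_mem ht (Submodule.smul_mem _ _ (antisymm3_mem_inf _ _ _))) rfl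
        rwa [Submodule.sub_mem_iff_left _
          (Submodule.smul_mem _ _ (antisymm3_mem_antisymm3Span k _ _ _))] at this
  · rintro _ ⟨x, y, z, rfl⟩
    exact antisymm3_mem_inf x y z

def bracket (a : V ⊗[k] V →ₗ[k] V) (x y : V) : V :=
  a (y ⊗ₜ[k] x - x ⊗ₜ[k] y)

theorem bgMap_antisymm3 (a : V ⊗[k] V →ₗ[k] V) (x y z : V) :
    bgMap k V a (antisymm3 k x y z)
      = (z ⊗ₜ bracket a x y - bracket a x y ⊗ₜ z) + (x ⊗ₜ bracket a y z - bracket a y z ⊗ₜ x)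
        + (y ⊗ₜ bracket a z x - bracket a z x ⊗ₜ y) := by
  simp only [bgMap, antisymm3, bracket, LinearMap.sub_apply, LinearMap.comp_apply, map_sub,
    map_add, TensorProduct.map_tmul, TensorProduct.assoc_tmul, LinearMap.id_coe, id_eq,
    LinearEquiv.coe_coe, sub_tmul, tmul_sub]
  abel

theorem bgMap_antisymm3_mem_altTensors (a : V ⊗[k] V →ₗ[k] V) (x y z : V) :
    bgMap k V a (antisymm3 k x y z) ∈ altTensors k V := by
  rw [bgMap_antisymm3]
  exact add_mem (add_mem (tmul_sub_tmul_mem_altTensors _ _) (tmul_sub_tmul_mem_altTensors _ _))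
    (tmul_sub_tmul_mem_altTensors _ _)

theorem apply_bgMap_antisymm3 (a : V ⊗[k] V →ₗ[k] V) (x y z : V) :
    a (bgMap k V a (antisymm3 k x y z))
      = bracket a (bracket a x y) z + bracket a (bracket a y z) x + bracket a (bracket a z x) y := by
  rw [bgMap_antisymm3, map_add, map_add]
  rfl

end

theorem bg_conditions_iff_jacobi
    (htwo : (2 : k) ≠ 0)
    (a : V ⊗[k] V →ₗ[k] V) :
    ((∀ t ∈ RtensorV k V (altTensors k V) ⊓ VtensorR k V (altTensors k V),
        bgMap k V a t ∈ altTensors k V) ∧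
     (∀ t ∈ RtensorV k V (altTensors k V) ⊓ VtensorR k V (altTensors k V),
        a (bgMap k V a t) = 0)) ↔
    (let br : V → V → V := fun x y => a (y ⊗ₜ[k] x - x ⊗ₜ[k] y)
     ∀ x y z : V, br (br x y) z + br (br y z) x + br (br z x) y = 0) := by
  rw [inf_eq_antisymm3Span htwo]
  constructor
  · rintro ⟨-, h⟩ _ x y z
    exact (apply_bgMap_antisymm3 a x y z).symm.trans
      (h _ (antisymm3_mem_antisymm3Span k x y z))
  · intro hJ
    constructor
    · refine fun t ht => (Submodule.span_le (p := (altTensors k V).comap (bgMap k V a))).2 ?_ ht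
      rintro _ ⟨x, y, z, rfl⟩
      exact bgMap_antisymm3_mem_altTensors a x y z
    · refine fun t ht => (Submodule.span_le (p := LinearMap.ker (a ∘ₗ bgMap k V a))).2 ?_ ht
      rintro _ ⟨x, y, z, rfl⟩
      exact (apply_bgMap_antisymm3 a x y z).trans (hJ x y z)

end
end

section
/- Let (A!, d, c) be a curved differential graded algebra over a field k: A! = ⊕_{i≥0} A!_i is a graded algebra, d an anti-derivation of degree 1 (d(ab) = d(a)b + (−1)^{|a|} a d(b)), c ∈ A!_2 with d(c) = 0 and d²(a) = [c, a] := c a − a c for all a. Let U be an algebra containing a copy of V = A!_1^* via structure constants as in the Koszul dual setup (U ⊗_k A! with the relation element vanishing). Then the k-linear endomorphism δ of U ⊗_k A! defined by δ(u ⊗ a) = Σ_α u x_α ⊗ x̌_α a + u ⊗ d(a) satisfies δ((u⊗a)·b) = δ(u⊗a)·b + (−1)^{|a|} (u⊗a)·d(b) for homogeneous a, b ∈ A!, and δ²(u ⊗ a) = −(u ⊗ a)·c. In particular (U ⊗_k A!, δ) is a right curved dg-module over (A!, d, c). -/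
open TensorProduct Module

noncomputable section

/-- **The Koszul dual bimodule `T = U ⊗ₖ A!` is a right cdg-module (Lemma 2.1).**
Let `(B, d, c)` be a curved differential graded algebra over `k` (graded by `𝒜`, with
anti-derivation `d` of degree 1 and curvature `c ∈ 𝒜 2` satisfying `d c = 0` and
`d² = [c, ·]`), let `V` be a finite-dimensional vector space with basis `(x_i)` and dual
basis `(x̌_i)`, let `φ : V → U` and `ψ : V* → B₁` be the structure maps, and assume the
relation element `Σ x_i x_j ⊗ x̌_j x̌_i + Σ x_i ⊗ d(x̌_i) + 1 ⊗ c` vanishes in `U ⊗ₖ B`.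
Then the endomorphism `δ(u ⊗ a) = Σ u x_i ⊗ x̌_i a + u ⊗ d a` of `U ⊗ₖ B` satisfies
`δ((u⊗a)·b) = δ(u⊗a)·b + (−1)^{|a|} (u⊗a)·(d b)` and `δ²(u⊗a) = −(u⊗a)·c`; that is,
`(U ⊗ₖ B, δ)` is a right curved dg-module over `(B, d, c)`. -/
theorem tensor_bimodule_is_right_cdg_module
    (k : Type) [Field k]
    (V : Type) [AddCommGroup V] [Module k V]
    (ι' : Type) [Fintype ι'] [DecidableEq ι'] (b : Basis ι' k V)
    (B : Type) [Ring B] [Algebra k B]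
    (𝒜 : ℕ → Submodule k B) [GradedAlgebra 𝒜]
    (d : B →ₗ[k] B) (c : B)
    (hd1 : ∀ (i : ℕ) (x : B), x ∈ 𝒜 i → d x ∈ 𝒜 (i + 1))
    (hder : ∀ (i : ℕ) (x y : B), x ∈ 𝒜 i →
      d (x * y) = d x * y + ((-1 : k) ^ i) • (x * d y))
    (hc : c ∈ 𝒜 2) (hdc : d c = 0)
    (hd2 : ∀ x : B, d (d x) = c * x - x * c)
    (U : Type) [Ring U] [Algebra k U]
    (φ : V →ₗ[k] U) (ψ : Dual k V →ₗ[k] B)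
    (hψ : ∀ ξ : Dual k V, ψ ξ ∈ 𝒜 1)
    (hrel : (∑ i, ∑ j, (φ (b i) * φ (b j)) ⊗ₜ[k] (ψ (b.dualBasis j) * ψ (b.dualBasis i)))
      + (∑ i, φ (b i) ⊗ₜ[k] d (ψ (b.dualBasis i)))
      + (1 : U) ⊗ₜ[k] c = 0)
    -- the endomorphism `δ(u ⊗ a) = Σ u x_i ⊗ x̌_i a + u ⊗ d a` of `U ⊗ₖ B`
    (δ : U ⊗[k] B →ₗ[k] U ⊗[k] B)
    (hδ : δ = (∑ i, TensorProduct.map (LinearMap.mulRight k (φ (b i)))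
          (LinearMap.mulLeft k (ψ (b.dualBasis i))))
        + TensorProduct.map LinearMap.id d)
    -- the right `B`-action on `U ⊗ₖ B`
    (act : B → U ⊗[k] B →ₗ[k] U ⊗[k] B)
    (hact : ∀ x : B, act x = TensorProduct.map LinearMap.id (LinearMap.mulRight k x)) :
    (∀ (u : U) (i : ℕ) (a : B), a ∈ 𝒜 i → ∀ x : B,
        δ (u ⊗ₜ[k] (a * x)) = act x (δ (u ⊗ₜ[k] a)) + ((-1 : k) ^ i) • (u ⊗ₜ[k] (a * d x)))
    ∧ (∀ (u : U) (a : B), δ (δ (u ⊗ₜ[k] a)) = - act c (u ⊗ₜ[k] a)) := by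
  subst hδ
  constructor
  · intro u i a ha x
    simp only [hact, LinearMap.add_apply, LinearMap.sum_apply, map_add, map_sum,
      TensorProduct.map_tmul, LinearMap.mulRight_apply, LinearMap.mulLeft_apply,
      LinearMap.id_coe, id_eq]
    rw [hder i a x ha, TensorProduct.tmul_add, TensorProduct.tmul_smul]
    simp only [mul_assoc]
    abel
  · intro u a
    have key := congrArg (TensorProduct.map (LinearMap.mulLeft k u)
      (LinearMap.mulRight k a)) hrel
    simp only [map_add, map_sum, TensorProduct.map_tmul, LinearMap.mulLeft_apply,
      LinearMap.mulRight_apply, map_zero, mul_one] at key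
    have hψd : ∀ ξ : Dual k V, ∀ y : B,
        d (ψ ξ * y) = d (ψ ξ) * y - ψ ξ * d y := by
      intro ξ y
      rw [hder 1 (ψ ξ) y (hψ ξ)]
      simp [sub_eq_add_neg]
    simp only [hact, LinearMap.add_apply, LinearMap.sum_apply, map_add, map_sum,
      TensorProduct.map_tmul, LinearMap.mulRight_apply, LinearMap.mulLeft_apply,
      LinearMap.id_coe, id_eq, hψd, hd2, TensorProduct.tmul_sub]
    rw [← sub_eq_zero]
    simp only [mul_assoc, Finset.sum_add_distrib, Finset.sum_sub_distrib] at key ⊢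
    rw [← key]
    abel

end
end
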